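/- arXiv:gr-qc/9712029 — 2 statements merged into one kernel-verified Lean document; each statement's English description precedes it below -/
import Mathlib

section
/- Let Λ > 0, A_B ∈ [0, 4π/Λ], A_n a sequence of positive reals, and E_B ≥ 0. Suppose for every ε₁, ε₃ > 0 there exists N such that for all n > N: (1/8π)·sqrt(A_B/16π)·(8π − ε₁ − (2Λ/3)A_B) − ε₃ ≤ (1/8π)·sqrt(A_n/16π)·(8π − (2Λ/3)A_n), and A_n → A_C. Then A_B + A_C + sqrt(A_B·A_C) ≤ 12π/Λ. -/
open Real Filter

/-- Limiting algebraic step of the main theorem: if the quasi-local energy of a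
black hole horizon cross-section of area `A_B ∈ [0, 4π/Λ]` is, up to errors
`ε₁, ε₃`, bounded by the energies of marginal spheres of areas `A_n → A_C`,
then `A_B + A_C + sqrt(A_B A_C) ≤ 12π/Λ`. -/
theorem limiting_step (Λ AB AC EB : ℝ) (A : ℕ → ℝ) (hΛ : 0 < Λ)
    (hAB0 : 0 ≤ AB) (hAB : AB ≤ 4 * π / Λ)
    (hApos : ∀ n, 0 < A n) (hEB : 0 ≤ EB)
    (hineq : ∀ ε₁ > (0 : ℝ), ∀ ε₃ > (0 : ℝ), ∃ N : ℕ, ∀ n > N,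
      1 / (8 * π) * Real.sqrt (AB / (16 * π)) * (8 * π - ε₁ - 2 * Λ / 3 * AB) - ε₃ ≤
        1 / (8 * π) * Real.sqrt (A n / (16 * π)) * (8 * π - 2 * Λ / 3 * A n))
    (hlim : Tendsto A atTop (nhds AC)) :
    AB + AC + Real.sqrt (AB * AC) ≤ 12 * π / Λ := by
  have hπ := Real.pi_pos
  have hACnn : 0 ≤ AC := ge_of_tendsto hlim (Eventually.of_forall fun n => (hApos n).le)
  -- limit of the right-hand side
  have hg : Tendsto (fun n => 1 / (8 * π) * Real.sqrt (A n / (16 * π)) *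
      (8 * π - 2 * Λ / 3 * A n)) atTop
      (nhds (1 / (8 * π) * Real.sqrt (AC / (16 * π)) * (8 * π - 2 * Λ / 3 * AC))) := by
    exact (tendsto_const_nhds.mul ((hlim.div_const (16 * π)).sqrt)).mul
      (tendsto_const_nhds.sub (tendsto_const_nhds.mul hlim))
  have hkey : 1 / (8 * π) * Real.sqrt (AB / (16 * π)) * (8 * π - 2 * Λ / 3 * AB) ≤
      1 / (8 * π) * Real.sqrt (AC / (16 * π)) * (8 * π - 2 * Λ / 3 * AC) := by
    apply le_of_forall_pos_le_add
    intro ε hε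
    set k := 1 / (8 * π) * Real.sqrt (AB / (16 * π)) with hk
    have hknn : 0 ≤ k := by positivity
    have hε₁ : (0:ℝ) < ε / (2 * (k + 1)) := by positivity
    have hε₃ : (0:ℝ) < ε / 2 := by positivity
    obtain ⟨N, hN⟩ := hineq _ hε₁ _ hε₃
    have hbound : k * (8 * π - ε / (2 * (k + 1)) - 2 * Λ / 3 * AB) - ε / 2 ≤
        1 / (8 * π) * Real.sqrt (AC / (16 * π)) * (8 * π - 2 * Λ / 3 * AC) :=
      ge_of_tendsto hg (eventually_atTop.mpr ⟨N + 1, fun n hn => hN n (by omega)⟩)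
    have hkdiv : k * (ε / (2 * (k + 1))) ≤ ε / 2 := by
      have h1 : k * (ε / (2 * (k + 1))) ≤ (k + 1) * (ε / (2 * (k + 1))) :=
        mul_le_mul_of_nonneg_right (by linarith) hε₁.le
      have h2 : (k + 1) * (ε / (2 * (k + 1))) = ε / 2 := by
        field_simp
      linarith
    nlinarith [hbound, hkdiv]
  -- strip the constants
  have hs : 0 < Real.sqrt (16 * π) := Real.sqrt_pos.mpr (by positivity)
  rw [Real.sqrt_div hAB0, Real.sqrt_div hACnn] at hkey
  have hkey2 : Real.sqrt AB * (8 * π - 2 * Λ / 3 * AB) ≤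
      Real.sqrt AC * (8 * π - 2 * Λ / 3 * AC) := by
    have hpos : (0:ℝ) < 8 * π * Real.sqrt (16 * π) := by positivity
    have e1 : 1 / (8 * π) * (Real.sqrt AB / Real.sqrt (16 * π)) * (8 * π - 2 * Λ / 3 * AB)
        = Real.sqrt AB * (8 * π - 2 * Λ / 3 * AB) / (8 * π * Real.sqrt (16 * π)) := by ring
    have e2 : 1 / (8 * π) * (Real.sqrt AC / Real.sqrt (16 * π)) * (8 * π - 2 * Λ / 3 * AC)
        = Real.sqrt AC * (8 * π - 2 * Λ / 3 * AC) / (8 * π * Real.sqrt (16 * π)) := by ring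
    rw [e1, e2, div_le_div_iff_of_pos_right hpos] at hkey
    exact hkey
  set a := Real.sqrt AB with ha
  set c := Real.sqrt AC with hc
  have ha0 : 0 ≤ a := Real.sqrt_nonneg _
  have hc0 : 0 ≤ c := Real.sqrt_nonneg _
  have ha2 : a ^ 2 = AB := Real.sq_sqrt hAB0
  have hc2 : c ^ 2 = AC := Real.sq_sqrt hACnn
  have hprod : Real.sqrt (AB * AC) = a * c := Real.sqrt_mul hAB0 AC
  have hAB' : AB * Λ ≤ 4 * π := (le_div_iff₀ hΛ).mp hAB
  rw [hprod, ← ha2, ← hc2, le_div_iff₀ hΛ]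
  rw [← ha2] at hAB'
  rcases le_or_gt c a with h | h
  · nlinarith [mul_nonneg (mul_nonneg (sub_nonneg.mpr h) ha0) hΛ.le,
      mul_nonneg (mul_nonneg (sub_nonneg.mpr h) (add_nonneg ha0 hc0)) hΛ.le]
  · rw [← ha2, ← hc2] at hkey2
    nlinarith [hkey2, sub_pos.mpr h, mul_pos (sub_pos.mpr h) hΛ, hπ]
end

section
/- Let Λ > 0 and let a, b ∈ [0, 12π/Λ] with a ≤ 4π/Λ ≤ b. If g(a) ≤ g(b) where g(A) = sqrt(A)·(12π/Λ − A), then a + b + sqrt(ab) ≤ 12π/Λ. -/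
open Real Set

/-- Algebraic identity behind Theorem 7: if `a ≤ 4π/Λ ≤ b` lie in
`[0, 12π/Λ]` and `g(a) ≤ g(b)` where `g(A) = sqrt(A)·(12π/Λ - A)`, then
`a + b + sqrt(ab) ≤ 12π/Λ`. -/
theorem energy_comparison_implies_bound (Λ a b : ℝ) (hΛ : 0 < Λ)
    (ha : a ∈ Icc (0 : ℝ) (12 * π / Λ)) (hb : b ∈ Icc (0 : ℝ) (12 * π / Λ))
    (hab : a ≤ 4 * π / Λ) (hba : 4 * π / Λ ≤ b)
    (hg : Real.sqrt a * (12 * π / Λ - a) ≤ Real.sqrt b * (12 * π / Λ - b)) :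
    a + b + Real.sqrt (a * b) ≤ 12 * π / Λ := by
  have hπ := Real.pi_pos
  have ha0 : 0 ≤ a := ha.1
  have hb0 : 0 ≤ b := hb.1
  have hab' : a ≤ b := hab.trans hba
  set x := Real.sqrt a with hxdef
  set y := Real.sqrt b with hydef
  have hx : x ^ 2 = a := Real.sq_sqrt ha0
  have hy : y ^ 2 = b := Real.sq_sqrt hb0
  have hxy : x ≤ y := Real.sqrt_le_sqrt hab'
  have hsab : Real.sqrt (a * b) = x * y := Real.sqrt_mul ha0 b
  rw [hsab, ← hx, ← hy]
  rcases eq_or_lt_of_le hxy with h | h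
  · have hA : a = b := by rw [← hx, ← hy, h]
    have : a = 4 * π / Λ := le_antisymm hab (hA ▸ hba)
    rw [h]
    have h3 : 12 * π / Λ = 3 * (4 * π / Λ) := by ring
    nlinarith [hy, this, hA, h3]
  · rw [← hx, ← hy] at hg
    nlinarith [sub_pos.2 h, mul_le_mul_of_nonneg_left hg (le_of_lt (sub_pos.2 h))]
end
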